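/- There exists α₀ > 0 such that for every α ∈ (0, α₀] and every n the following holds: if D is a directed graph on 2n vertices with δ⁰(D) ≥ n and D is α-extremal, then there exists a partition {X₁′, X₂′, Y₁′, Y₂′, Z} of V(D) such that (i) |Z| ≤ 3α^{2/3}n and ||X₁′| − |X₂′||, ||Y₁′| − |Y₂′|| ≤ 3α^{2/3}n, and (ii) for each i ∈ {1,2}: every vertex of X′_{3−i} has at least |X′_i| − 2α^{1/3}n out-neighbors in X′_i and at least |X′_i| − 2α^{1/3}n in-neighbors in X′_i; every vertex of Y′_{3−i} has at least |X′_i| − 2α^{1/3}n in-neighbors in X′_i; every vertex of Y′_i has at least |X′_i| − 2α^{1/3}n out-neighbors in X′_i; every vertex of Y′_i has at least |Y′_i| − 2α^{1/3}n out-neighbors in Y′_i and at least |Y′_i| − 2α^{1/3}n in-neighbors in Y′_i; every vertex of X′_i has at least |Y′_i| − 2α^{1/3}n in-neighbors in Y′_i; and every vertex of X′_{3−i} has at least |Y′_i| − 2α^{1/3}n out-neighbors in Y′_i. -/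

import Mathlib

/-!
Let `A, B` witness `α`-extremality and put `β = α^{1/3}`. Since all semi-degrees are at least `n`
while `|A|, |B| ≈ n`, every vertex of `A` has almost all of `Bᶜ` as out-neighbours and every vertex
of `B` has almost all of `Aᶜ` as in-neighbours: at most `2αn` exceptions each. Double counting these
missing edges shows that only `O(β²n)` vertices outside `A` miss more than `2βn` out-neighbours in
`B`, or outside `B` miss more than `2βn` in-neighbours in `A`; they form `Z`. The partition is the
Venn diagram of `A` and `B` with `Z` removed (`X₁' = A ∩ B`, `X₂' = (A ∪ B)ᶜ`, `Y₁' = B \ A`,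
`Y₂' = A \ B`), and each required degree condition is one of these four bounds.
-/

noncomputable def outDeg {V : Type*} (E : V → V → Prop) (v : V) : ℕ := {w | E v w}.ncard
noncomputable def inDeg {V : Type*} (E : V → V → Prop) (v : V) : ℕ := {w | E w v}.ncard

/-- A digraph on `N` vertices is `α`-extremal. -/
def AlphaExtremal (α : ℝ) {V : Type*} (E : V → V → Prop) : Prop :=
  ∃ A B : Set V,
    (1 - α) * (Nat.card V : ℝ) / 2 ≤ (A.ncard : ℝ) ∧
    (A.ncard : ℝ) ≤ (1 + α) * (Nat.card V : ℝ) / 2 ∧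
    (1 - α) * (Nat.card V : ℝ) / 2 ≤ (B.ncard : ℝ) ∧
    (B.ncard : ℝ) ≤ (1 + α) * (Nat.card V : ℝ) / 2 ∧
    (∀ a ∈ A, ({b ∈ B | E a b}.ncard : ℝ) ≤ α * (Nat.card V : ℝ) / 2) ∧
    (∀ b ∈ B, ({a ∈ A | E a b}.ncard : ℝ) ≤ α * (Nat.card V : ℝ) / 2)

open Set

namespace Set

variable {α β : Type*}

theorem ncard_mul_le_ncard_mul (r : α → β → Prop) {s : Set α} {t : Set β} {m c : ℝ}
    (hs : s.Finite) (ht : t.Finite)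
    (hm : ∀ a ∈ s, m ≤ {b ∈ t | r a b}.ncard) (hc : ∀ b ∈ t, {a ∈ s | r a b}.ncard ≤ c) :
    s.ncard * m ≤ t.ncard * c := by
  classical
  lift s to Finset α using hs
  lift t to Finset β using ht
  have := Finset.card_nsmul_le_card_nsmul r
    (fun a ha => by rw [← ncard_coe_finset, Finset.coe_bipartiteAbove]; exact hm a ha)
    (fun b hb => by rw [← ncard_coe_finset, Finset.coe_bipartiteBelow]; exact hc b hb)
  simpa only [nsmul_eq_mul, ncard_coe_finset] using this

theorem pairwise_disjoint_venn_sdiff (A B Z : Set α) :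
    ([(A ∩ B) \ Z, (A ∪ B)ᶜ \ Z, (B \ A) \ Z, (A \ B) \ Z, Z] : List (Set α)).Pairwise Disjoint := by
  simp only [List.pairwise_cons, List.mem_cons, List.not_mem_nil, or_false, forall_eq_or_imp,
    forall_eq, List.Pairwise.nil, disjoint_left, mem_sdiff, mem_inter_iff, mem_union, mem_compl_iff]
  tauto

theorem venn_sdiff_union_eq_univ (A B Z : Set α) :
    (A ∩ B) \ Z ∪ (A ∪ B)ᶜ \ Z ∪ (B \ A) \ Z ∪ (A \ B) \ Z ∪ Z = univ := by
  ext v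
  simp only [mem_union, mem_sdiff, mem_inter_iff, mem_compl_iff, mem_univ, iff_true]
  tauto

variable [Finite α]

theorem ncard_sub_le_ncard_inter {T U : Set α} (h : T ⊆ U) (N : Set α) {c : ℝ}
    (hc : ((U \ N).ncard : ℝ) ≤ c) : (T.ncard : ℝ) - c ≤ (T ∩ N).ncard := by
  have : T.ncard ≤ (T ∩ N).ncard + (U \ N).ncard := by
    rw [← ncard_inter_add_ncard_sdiff_eq_ncard T N]
    exact Nat.add_le_add_left (ncard_le_ncard (sdiff_subset_sdiff_left h)) _
  have : (T.ncard : ℝ) ≤ (T ∩ N).ncard + (U \ N).ncard := by exact_mod_cast this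
  linarith

theorem abs_ncard_sdiff_sub_ncard_sdiff_le (s t Z : Set α) :
    |((s \ Z).ncard : ℝ) - (t \ Z).ncard| ≤ |(s.ncard : ℝ) - t.ncard| + Z.ncard := by
  have hs : ((s ∩ Z).ncard : ℝ) + (s \ Z).ncard = s.ncard := by
    exact_mod_cast ncard_inter_add_ncard_sdiff_eq_ncard s Z
  have ht : ((t ∩ Z).ncard : ℝ) + (t \ Z).ncard = t.ncard := by
    exact_mod_cast ncard_inter_add_ncard_sdiff_eq_ncard t Z
  have hsZ : ((s ∩ Z).ncard : ℝ) ≤ Z.ncard := by exact_mod_cast ncard_le_ncard inter_subset_right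
  have htZ : ((t ∩ Z).ncard : ℝ) ≤ Z.ncard := by exact_mod_cast ncard_le_ncard inter_subset_right
  rw [abs_le]
  constructor <;> linarith [le_abs_self ((s.ncard : ℝ) - t.ncard),
    neg_abs_le ((s.ncard : ℝ) - t.ncard)]

theorem ncard_inter_sub_ncard_compl_union (A B : Set α) :
    ((A ∩ B).ncard : ℝ) - (A ∪ B)ᶜ.ncard = A.ncard + B.ncard - Nat.card α := by
  have h1 : ((A ∪ B).ncard : ℝ) + (A ∩ B).ncard = A.ncard + B.ncard := by
    exact_mod_cast ncard_union_add_ncard_inter A B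
  have h2 : ((A ∪ B).ncard : ℝ) + (A ∪ B)ᶜ.ncard = Nat.card α := by
    exact_mod_cast ncard_add_ncard_compl (A ∪ B)
  linarith

theorem ncard_sdiff_sub_ncard_sdiff (A B : Set α) :
    ((B \ A).ncard : ℝ) - (A \ B).ncard = B.ncard - A.ncard := by
  have h1 := ncard_sdiff_add_ncard B A
  have h2 := ncard_sdiff_add_ncard A B
  rw [union_comm] at h1
  have : ((B \ A).ncard : ℝ) + A.ncard = (A \ B).ncard + B.ncard := by exact_mod_cast h1.trans h2.symm
  linarith

theorem abs_ncard_venn_sdiff_sub_le {A B : Set α} (Z : Set α) {n : ℕ} {a : ℝ}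
    (hV : Nat.card α = 2 * n) (hA : (1 - a) * n ≤ A.ncard) (hA' : A.ncard ≤ (1 + a) * n)
    (hB : (1 - a) * n ≤ B.ncard) (hB' : B.ncard ≤ (1 + a) * n) :
    |(((A ∩ B) \ Z).ncard : ℝ) - ((A ∪ B)ᶜ \ Z).ncard| ≤ 2 * a * n + Z.ncard ∧
      |(((B \ A) \ Z).ncard : ℝ) - ((A \ B) \ Z).ncard| ≤ 2 * a * n + Z.ncard := by
  refine ⟨(abs_ncard_sdiff_sub_ncard_sdiff_le _ _ Z).trans ?_,
    (abs_ncard_sdiff_sub_ncard_sdiff_le _ _ Z).trans ?_⟩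
  · rw [ncard_inter_sub_ncard_compl_union, hV]
    push_cast
    gcongr
    exact abs_le.2 ⟨by linarith, by linarith⟩
  · rw [ncard_sdiff_sub_ncard_sdiff]
    gcongr
    exact abs_le.2 ⟨by linarith, by linarith⟩

end Set

theorem Real.pow_three_rpow_div_three {x : ℝ} (hx : 0 ≤ x) (y : ℝ) : (x ^ 3) ^ (y / 3) = x ^ y := by
  rw [← Real.rpow_natCast, ← Real.rpow_mul hx]
  ring_nf

theorem exists_pow_three_eq_of_le {α : ℝ} (hα : 0 < α) (hα₀ : α ≤ 1 / 1000) :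
    ∃ β : ℝ, 0 < β ∧ β ≤ 1 / 10 ∧ β ^ 3 = α := by
  refine ⟨α ^ ((1 : ℝ) / 3), by positivity, ?_, ?_⟩
  · calc α ^ ((1 : ℝ) / 3) ≤ ((1 / 10 : ℝ) ^ 3) ^ ((1 : ℝ) / 3) := by gcongr; linarith
      _ = 1 / 10 := by rw [Real.pow_three_rpow_div_three (by norm_num), Real.rpow_one]
  · rw [← Real.rpow_natCast, ← Real.rpow_mul hα.le]
    norm_num

section Digraph

variable {V : Type*} [Finite V] {E : V → V → Prop}

theorem ncard_compl_sdiff_inNbrs_le {A : Set V} {v : V} {n : ℕ} {α : ℝ}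
    (hV : Nat.card V = 2 * n) (hv : n ≤ inDeg E v)
    (hA : (1 - α) * (Nat.card V : ℝ) / 2 ≤ A.ncard)
    (hvA : ({a ∈ A | E a v}.ncard : ℝ) ≤ α * (Nat.card V : ℝ) / 2) :
    ((Aᶜ \ {w | E w v}).ncard : ℝ) ≤ 2 * α * n := by
  set N := {w | E w v}
  have hN : ((A ∩ N).ncard : ℝ) + (N \ A).ncard = N.ncard := by
    rw [inter_comm]; exact_mod_cast ncard_inter_add_ncard_sdiff_eq_ncard N A
  have hAc : ((N \ A).ncard : ℝ) + (Aᶜ \ N).ncard = Aᶜ.ncard := by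
    rw [sdiff_eq, inter_comm]; exact_mod_cast ncard_inter_add_ncard_sdiff_eq_ncard Aᶜ N
  have hcompl : (A.ncard : ℝ) + Aᶜ.ncard = 2 * n := by
    exact_mod_cast (ncard_add_ncard_compl A).trans hV
  have hv' : (n : ℝ) ≤ N.ncard := by exact_mod_cast hv
  push_cast [hV] at hA hvA
  change ((A ∩ N).ncard : ℝ) ≤ _ at hvA
  linarith

theorem AlphaExtremal.exists_ncard_compl_sdiff_le {n : ℕ} {α : ℝ} (hV : Nat.card V = 2 * n)
    (hdeg : ∀ v, n ≤ outDeg E v ∧ n ≤ inDeg E v) (h : AlphaExtremal α E) :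
    ∃ A B : Set V, (1 - α) * n ≤ A.ncard ∧ A.ncard ≤ (1 + α) * n ∧
      (1 - α) * n ≤ B.ncard ∧ B.ncard ≤ (1 + α) * n ∧
      (∀ a ∈ A, ((Bᶜ \ {w | E a w}).ncard : ℝ) ≤ 2 * α * n) ∧
      (∀ b ∈ B, ((Aᶜ \ {w | E w b}).ncard : ℝ) ≤ 2 * α * n) := by
  obtain ⟨A, B, hA, hA', hB, hB', hAB, hBA⟩ := h
  refine ⟨A, B, ?_, ?_, ?_, ?_,
    fun a ha => ncard_compl_sdiff_inNbrs_le (E := fun x y => E y x) hV (hdeg a).1 hB (hAB a ha),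
    fun b hb => ncard_compl_sdiff_inNbrs_le hV (hdeg b).2 hA (hBA b hb)⟩ <;>
  push_cast [hV] at * <;> linarith

def outExceptionalSet (E : V → V → Prop) (A B : Set V) (t : ℝ) : Set V :=
  {v ∈ Aᶜ | t < ((B \ {w | E v w}).ncard : ℝ)}

def exceptionalSet (E : V → V → Prop) (A B : Set V) (t : ℝ) : Set V :=
  outExceptionalSet E A B t ∪ outExceptionalSet (fun x y => E y x) B A t

theorem ncard_outExceptionalSet_mul_le {A B : Set V} {t c : ℝ}
    (hB : ∀ b ∈ B, ((Aᶜ \ {w | E w b}).ncard : ℝ) ≤ c) :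
    (outExceptionalSet E A B t).ncard * t ≤ B.ncard * c :=
  ncard_mul_le_ncard_mul (fun v b => ¬ E v b) (toFinite _) (toFinite B) (fun v hv => hv.2.le)
    fun b hb => (Nat.cast_le.2 (ncard_le_ncard (t := Aᶜ \ {w | E w b})
      fun v hv => ⟨hv.1.1, hv.2⟩)).trans (hB b hb)

theorem ncard_exceptionalSet_mul_le {A B : Set V} {t c : ℝ} (ht : 0 ≤ t)
    (hA : ∀ a ∈ A, ((Bᶜ \ {w | E a w}).ncard : ℝ) ≤ c)
    (hB : ∀ b ∈ B, ((Aᶜ \ {w | E w b}).ncard : ℝ) ≤ c) :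
    (exceptionalSet E A B t).ncard * t ≤ (A.ncard + B.ncard) * c := by
  have hout := ncard_outExceptionalSet_mul_le (t := t) hB
  have hin := ncard_outExceptionalSet_mul_le (E := fun x y => E y x) (t := t) hA
  have hunion : ((exceptionalSet E A B t).ncard : ℝ) ≤
      (outExceptionalSet E A B t).ncard + (outExceptionalSet (fun x y => E y x) B A t).ncard := by
    exact_mod_cast ncard_union_le _ _
  nlinarith

theorem ncard_exceptionalSet_le {A B : Set V} {β : ℝ} {n : ℕ} (hβ : 0 < β) (hβ₀ : β ≤ 1 / 10)
    (hn : 0 < n) (hA : A.ncard ≤ (1 + β ^ 3) * n) (hB : B.ncard ≤ (1 + β ^ 3) * n)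
    (hAc : ∀ a ∈ A, ((Bᶜ \ {w | E a w}).ncard : ℝ) ≤ 2 * β ^ 3 * n)
    (hBc : ∀ b ∈ B, ((Aᶜ \ {w | E w b}).ncard : ℝ) ≤ 2 * β ^ 3 * n) :
    2 * β ^ 3 * n + (exceptionalSet E A B (2 * β * n)).ncard ≤ 3 * β ^ 2 * n := by
  have hβn : 0 < 2 * β * n := by positivity
  have hZ := ncard_exceptionalSet_mul_le hβn.le hAc hBc
  have hAB : ((A.ncard + B.ncard) : ℝ) * (2 * β ^ 3 * n) ≤ 2 * (1 + β ^ 3) * n * (2 * β ^ 3 * n) :=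
    mul_le_mul_of_nonneg_right (by linarith) (by positivity)
  have hZ' : ((exceptionalSet E A B (2 * β * n)).ncard : ℝ) ≤ 2 * (1 + β ^ 3) * β ^ 2 * n :=
    le_of_mul_le_mul_right (hZ.trans (hAB.trans_eq (by ring))) hβn
  have hβ' : 2 * β + 2 * β ^ 3 ≤ 1 := by nlinarith
  have hβ2n : 0 ≤ β ^ 2 * n := by positivity
  nlinarith

theorem ncard_sub_le_ncard_outNbrs {A B T : Set V} {v : V} {c : ℝ}
    (hA : ∀ a ∈ A, ((Bᶜ \ {w | E a w}).ncard : ℝ) ≤ c)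
    (hv : (T ⊆ B ∧ v ∉ A ∧ v ∉ exceptionalSet E A B c) ∨ (T ⊆ Bᶜ ∧ v ∈ A)) :
    (T.ncard : ℝ) - c ≤ {w ∈ T | E v w}.ncard := by
  rcases hv with ⟨hT, hvA, hvZ⟩ | ⟨hT, hvA⟩
  · exact ncard_sub_le_ncard_inter hT _ (not_lt.1 fun h => hvZ (Or.inl ⟨hvA, h⟩))
  · exact ncard_sub_le_ncard_inter hT _ (hA v hvA)

theorem ncard_sub_le_ncard_inNbrs {A B T : Set V} {v : V} {c : ℝ}
    (hB : ∀ b ∈ B, ((Aᶜ \ {w | E w b}).ncard : ℝ) ≤ c)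
    (hv : (T ⊆ A ∧ v ∉ B ∧ v ∉ exceptionalSet E A B c) ∨ (T ⊆ Aᶜ ∧ v ∈ B)) :
    (T.ncard : ℝ) - c ≤ {w ∈ T | E w v}.ncard := by
  rcases hv with ⟨hT, hvB, hvZ⟩ | ⟨hT, hvB⟩
  · exact ncard_sub_le_ncard_inter hT _ (not_lt.1 fun h => hvZ (Or.inr ⟨hvB, h⟩))
  · exact ncard_sub_le_ncard_inter hT _ (hB v hvB)

end Digraph

theorem statement16 :
    ∃ α₀ : ℝ, 0 < α₀ ∧ ∀ α : ℝ, 0 < α → α ≤ α₀ →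
    ∀ (n : ℕ) (V : Type) (E : V → V → Prop),
      Nat.card V = 2 * n → (∀ v, ¬ E v v) →
      (∀ v, n ≤ outDeg E v ∧ n ≤ inDeg E v) →
      AlphaExtremal α E →
      -- the partition {X₁', X₂', Y₁', Y₂', Z} (indices in Fin 2; `i+1` plays
      -- the role of `3 - i`)
      ∃ (X Y : Fin 2 → Set V) (Z : Set V),
        ([X 0, X 1, Y 0, Y 1, Z] : List (Set V)).Pairwise Disjoint ∧
        X 0 ∪ X 1 ∪ Y 0 ∪ Y 1 ∪ Z = Set.univ ∧
        (Z.ncard : ℝ) ≤ 3 * α ^ ((2 : ℝ) / 3) * n ∧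
        |((X 0).ncard : ℝ) - ((X 1).ncard : ℝ)| ≤ 3 * α ^ ((2 : ℝ) / 3) * n ∧
        |((Y 0).ncard : ℝ) - ((Y 1).ncard : ℝ)| ≤ 3 * α ^ ((2 : ℝ) / 3) * n ∧
        ∀ i : Fin 2,
          (∀ v ∈ X (i + 1),
            ((X i).ncard : ℝ) - 2 * α ^ ((1 : ℝ) / 3) * n ≤
              ({w ∈ X i | E v w}.ncard : ℝ) ∧
            ((X i).ncard : ℝ) - 2 * α ^ ((1 : ℝ) / 3) * n ≤
              ({w ∈ X i | E w v}.ncard : ℝ)) ∧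
          (∀ v ∈ Y (i + 1),
            ((X i).ncard : ℝ) - 2 * α ^ ((1 : ℝ) / 3) * n ≤
              ({w ∈ X i | E w v}.ncard : ℝ)) ∧
          (∀ v ∈ Y i,
            ((X i).ncard : ℝ) - 2 * α ^ ((1 : ℝ) / 3) * n ≤
              ({w ∈ X i | E v w}.ncard : ℝ)) ∧
          (∀ v ∈ Y i,
            ((Y i).ncard : ℝ) - 2 * α ^ ((1 : ℝ) / 3) * n ≤
              ({w ∈ Y i | E v w}.ncard : ℝ) ∧
            ((Y i).ncard : ℝ) - 2 * α ^ ((1 : ℝ) / 3) * n ≤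
              ({w ∈ Y i | E w v}.ncard : ℝ)) ∧
          (∀ v ∈ X i,
            ((Y i).ncard : ℝ) - 2 * α ^ ((1 : ℝ) / 3) * n ≤
              ({w ∈ Y i | E w v}.ncard : ℝ)) ∧
          (∀ v ∈ X (i + 1),
            ((Y i).ncard : ℝ) - 2 * α ^ ((1 : ℝ) / 3) * n ≤
              ({w ∈ Y i | E v w}.ncard : ℝ)) := by
  refine ⟨1 / 1000, by norm_num, fun α hα hα₀ n V E hV _ hdeg hext => ?_⟩
  rcases Nat.eq_zero_or_pos n with rfl | hn
  -- `Nat.card V = 0`: `V` is empty or infinite, and either way `univ.ncard = 0`.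
  · exact ⟨fun _ => ∅, fun _ => ∅, univ, by simp, by simp, by simp [hV], by simp, by simp, by simp⟩
  have : Finite V := Nat.finite_of_card_ne_zero (by omega)
  obtain ⟨β, hβ, hβ₀, rfl⟩ := exists_pow_three_eq_of_le hα hα₀
  rw [Real.pow_three_rpow_div_three hβ.le, Real.pow_three_rpow_div_three hβ.le, Real.rpow_one,
    Real.rpow_two]
  obtain ⟨A, B, hA, hA', hB, hB', hAc, hBc⟩ := hext.exists_ncard_compl_sdiff_le hV hdeg
  have hZ := ncard_exceptionalSet_le hβ hβ₀ hn hA' hB' hAc hBc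
  set Z := exceptionalSet E A B (2 * β * n) with hZ_def
  have hc : 2 * β ^ 3 * (n : ℝ) ≤ 2 * β * n := by gcongr; nlinarith
  have hAc' a ha := (hAc a ha).trans hc
  have hBc' b hb := (hBc b hb).trans hc
  obtain ⟨hX, hY⟩ := abs_ncard_venn_sdiff_sub_le Z hV hA hA' hB hB'
  refine ⟨![(A ∩ B) \ Z, (A ∪ B)ᶜ \ Z], ![(B \ A) \ Z, (A \ B) \ Z], Z,
    pairwise_disjoint_venn_sdiff A B Z, venn_sdiff_union_eq_univ A B Z, by linarith,
    hX.trans (by linarith), hY.trans (by linarith), fun i => ?_⟩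
  -- Each degree condition is one of the two neighbour bounds; choosing which is set bookkeeping.
  fin_cases i <;>
  refine ⟨fun v hv => ⟨ncard_sub_le_ncard_outNbrs hAc' ?_, ncard_sub_le_ncard_inNbrs hBc' ?_⟩,
    fun v hv => ncard_sub_le_ncard_inNbrs hBc' ?_, fun v hv => ncard_sub_le_ncard_outNbrs hAc' ?_,
    fun v hv => ⟨ncard_sub_le_ncard_outNbrs hAc' ?_, ncard_sub_le_ncard_inNbrs hBc' ?_⟩,
    fun v hv => ncard_sub_le_ncard_inNbrs hBc' ?_, fun v hv => ncard_sub_le_ncard_outNbrs hAc' ?_⟩ <;>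
  simp only [← hZ_def, Fin.zero_eta, Fin.mk_one, Fin.isValue, zero_add,
    show (1 : Fin 2) + 1 = 0 from rfl, Matrix.cons_val_zero, Matrix.cons_val_one, subset_def,
    mem_sdiff, mem_inter_iff, mem_union, mem_compl_iff] at hv ⊢ <;>
  first
  | exact Or.inl ⟨fun x hx => by tauto, by tauto⟩
  | exact Or.inr ⟨fun x hx => by tauto, by tauto⟩
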